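/- Let m ≥ 1 be an integer and let b ∈ [b_min(m), b_max(m)). Then 2(1+m)(2 b^{−m/2} − 1)·d_min(b,m)^{1+m/2} ≤ −m(2 b^{−m/2} − 1)·b^{1+m/2} + 2(2+m)·t₀(b,m) ≤ 2(1+m)(2 b^{−m/2} − 1)·d_max(b,m)^{1+m/2}. In particular, there exists d_opt ∈ [d_min(b,m), d_max(b,m)] with 2(1+m)(2 b^{−m/2} − 1)·d_opt^{1+m/2} = −m(2 b^{−m/2} − 1)·b^{1+m/2} + 2(2+m)·t₀(b,m). -/
import Mathlib


open MeasureTheory Real Set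

/-- `t₀(b,m)`. -/
noncomputable def t0 (m : ℕ) (b : ℝ) : ℝ :=
  ((2 + (m : ℝ)) / (2 * (1 + (m : ℝ)))) ^ (2 / (m : ℝ)) *
    (2 * b ^ (-(m : ℝ) / 2) - 1) ^ (-(2 / (m : ℝ)))

/-- `b_min(m)`. -/
noncomputable def bmin (m : ℕ) : ℝ := ((2 + 3 * (m : ℝ)) / (2 + 2 * (m : ℝ))) ^ (2 / (m : ℝ))

/-- `b_max(m)`. -/
noncomputable def bmax (m : ℕ) : ℝ := (2 : ℝ) ^ (2 / (m : ℝ))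

/-- `d_min(b,m)`. -/
noncomputable def dmin (m : ℕ) (b : ℝ) : ℝ :=
  ((2 + (m : ℝ)) / (2 * (1 + (m : ℝ)) * (2 * b ^ (-(m : ℝ) / 2) - 1))) ^ (2 / (m : ℝ))

/-- `d_max(b,m)`. -/
noncomputable def dmax (m : ℕ) (b : ℝ) : ℝ :=
  ((2 + 3 * (m : ℝ)) / (2 * (1 + (m : ℝ)) * (2 * b ^ (-(m : ℝ) / 2) - 1))) ^ (2 / (m : ℝ))

/-- For `b ∈ [b_min(m), b_max(m))` the quantity
`-m(2b^{-m/2}-1) b^{1+m/2} + 2(2+m) t₀(b,m)` lies between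
`2(1+m)(2b^{-m/2}-1) d_min^{1+m/2}` and `2(1+m)(2b^{-m/2}-1) d_max^{1+m/2}`; in particular
there is `d_opt ∈ [d_min, d_max]` realizing equality. -/
private lemma aux_setup (m : ℕ) (hm : 1 ≤ m) (b : ℝ) (hb : b ∈ Set.Ico (bmin m) (bmax m)) :
    0 < b ∧ 0 < b ^ ((m:ℝ)/2) ∧ b ^ ((m:ℝ)/2) < 2 ∧
      (2 + 3*(m:ℝ))/(2 + 2*(m:ℝ)) ≤ b ^ ((m:ℝ)/2) ∧
      (b ^ ((m:ℝ)/2)) ^ (2/(m:ℝ)) = b := by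
  obtain ⟨hbl, hbu⟩ := hb
  have hm1 : (1:ℝ) ≤ (m:ℝ) := by exact_mod_cast hm
  have hm0 : (0:ℝ) < (m:ℝ) := by linarith
  have hk0 : (0:ℝ) < 2 / (m:ℝ) := by positivity
  have hbmin1 : (1:ℝ) ≤ bmin m := by
    apply Real.one_le_rpow _ hk0.le
    rw [le_div_iff₀ (by linarith)]
    linarith
  have hb1 : (1:ℝ) ≤ b := hbmin1.trans hbl
  have hb0 : (0:ℝ) < b := by linarith
  refine ⟨hb0, Real.rpow_pos_of_pos hb0 _, ?_, ?_, ?_⟩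
  · have h := Real.rpow_lt_rpow hb0.le hbu (by positivity : (0:ℝ) < (m:ℝ)/2)
    rwa [bmax, ← Real.rpow_mul (by norm_num : (0:ℝ) ≤ 2),
      show 2/(m:ℝ) * ((m:ℝ)/2) = 1 by field_simp, Real.rpow_one] at h
  · have h := Real.rpow_le_rpow (zero_le_one.trans hbmin1) hbl
      (by positivity : (0:ℝ) ≤ (m:ℝ)/2)
    rwa [bmin, ← Real.rpow_mul (by positivity),
      show 2/(m:ℝ) * ((m:ℝ)/2) = 1 by field_simp, Real.rpow_one] at h
  · rw [← Real.rpow_mul hb0.le, show (m:ℝ)/2 * (2/(m:ℝ)) = 1 by field_simp,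
      Real.rpow_one]

private lemma aux1 (m : ℕ) (hm : 1 ≤ m) (b x : ℝ) (hb0 : 0 < b) (hx0 : 0 < x)
    (hx2 : x < 2) (hxl : (2 + 3*(m:ℝ))/(2 + 2*(m:ℝ)) ≤ x) (hxk : x ^ (2/(m:ℝ)) = b) :
    (m:ℝ)*(2*x⁻¹-1)*(b*x)
      ≤ (2+(m:ℝ)) * ((2+(m:ℝ))/(2*(1+(m:ℝ))*(2*x⁻¹-1))) ^ (2/(m:ℝ)) := by
  have hm1 : (1:ℝ) ≤ (m:ℝ) := by exact_mod_cast hm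
  have hm0 : (0:ℝ) < (m:ℝ) := by linarith
  have hk0 : (0:ℝ) < 2 / (m:ℝ) := by positivity
  have hc0 : 0 < 2*x⁻¹ - 1 := by
    have h : (0:ℝ) < (2 - x)/x := div_pos (by linarith) hx0
    have h2 : (2 - x)/x = 2*x⁻¹ - 1 := by field_simp
    linarith [h2 ▸ h]
  have hA0 : 0 < 2*(1+(m:ℝ))*(2*x⁻¹-1) := mul_pos (by linarith) hc0
  have hxl' : 2 + 3*(m:ℝ) ≤ x*(2 + 2*(m:ℝ)) := by
    rw [div_le_iff₀ (by linarith)] at hxl; linarith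
  have hyA : 2*(1+(m:ℝ))*(2-x) ≤ 2+(m:ℝ) := by nlinarith
  have hreq : (2+(m:ℝ))/(2*(1+(m:ℝ))*(2*x⁻¹-1))
      = (2+(m:ℝ))/(2*(1+(m:ℝ))*(2-x)) * x := by
    rw [div_mul_eq_mul_div,
      div_eq_div_iff hA0.ne' (by nlinarith : (2*(1+(m:ℝ))*(2-x)) ≠ 0)]
    field_simp
  have hq1 : (1:ℝ) ≤ (2+(m:ℝ))/(2*(1+(m:ℝ))*(2-x)) := by
    rw [le_div_iff₀ (by nlinarith)]; linarith
  have hqk : (1:ℝ) ≤ ((2+(m:ℝ))/(2*(1+(m:ℝ))*(2-x))) ^ (2/(m:ℝ)) :=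
    Real.one_le_rpow hq1 hk0.le
  have hrk : ((2+(m:ℝ))/(2*(1+(m:ℝ))*(2*x⁻¹-1))) ^ (2/(m:ℝ))
      = ((2+(m:ℝ))/(2*(1+(m:ℝ))*(2-x))) ^ (2/(m:ℝ)) * b := by
    rw [hreq, Real.mul_rpow (by linarith) hx0.le, hxk]
  have hcxb : (2*x⁻¹-1)*(b*x) = (2-x)*b := by field_simp
  rw [hrk]
  calc (m:ℝ)*(2*x⁻¹-1)*(b*x) = (m:ℝ)*((2-x)*b) := by rw [mul_assoc, hcxb]
    _ ≤ (2+(m:ℝ))*b := by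
        have hyb : (m:ℝ)*(2-x) ≤ 2+(m:ℝ) := by nlinarith
        nlinarith [mul_le_mul_of_nonneg_right hyb hb0.le]
    _ ≤ (2+(m:ℝ)) * (((2+(m:ℝ))/(2*(1+(m:ℝ))*(2-x))) ^ (2/(m:ℝ)) * b) := by
        have hb' : b ≤ ((2+(m:ℝ))/(2*(1+(m:ℝ))*(2-x))) ^ (2/(m:ℝ)) * b := by
          nlinarith [mul_le_mul_of_nonneg_right hqk hb0.le]
        nlinarith

private lemma aux2 (m : ℕ) (hm : 1 ≤ m) (x : ℝ) (hx0 : 0 < x) (hx2 : x < 2) :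
    2*(2+(m:ℝ)) * ((2+(m:ℝ))/(2*(1+(m:ℝ))*(2*x⁻¹-1))) ^ (2/(m:ℝ))
      ≤ (2+3*(m:ℝ)) * ((2+3*(m:ℝ))/(2*(1+(m:ℝ))*(2*x⁻¹-1))) ^ (2/(m:ℝ)) := by
  have hm1 : (1:ℝ) ≤ (m:ℝ) := by exact_mod_cast hm
  have hm0 : (0:ℝ) < (m:ℝ) := by linarith
  have hk0 : (0:ℝ) < 2 / (m:ℝ) := by positivity
  have hc0 : 0 < 2*x⁻¹ - 1 := by
    have h : (0:ℝ) < (2 - x)/x := div_pos (by linarith) hx0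
    have h2 : (2 - x)/x = 2*x⁻¹ - 1 := by field_simp
    linarith [h2 ▸ h]
  have hA0 : 0 < 2*(1+(m:ℝ))*(2*x⁻¹-1) := mul_pos (by linarith) hc0
  have hr0 : 0 < (2+(m:ℝ))/(2*(1+(m:ℝ))*(2*x⁻¹-1)) := div_pos (by linarith) hA0
  have hueq : (2+3*(m:ℝ))/(2*(1+(m:ℝ))*(2*x⁻¹-1))
      = (2+3*(m:ℝ))/(2+(m:ℝ)) * ((2+(m:ℝ))/(2*(1+(m:ℝ))*(2*x⁻¹-1))) := by
    rw [div_mul_div_comm,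
      div_eq_div_iff hA0.ne'
        (by positivity : ((2+(m:ℝ)) * (2*(1+(m:ℝ))*(2*x⁻¹-1))) ≠ 0)]
    ring
  have hbern : (3:ℝ) ≤ ((2+3*(m:ℝ))/(2+(m:ℝ))) ^ (1 + 2/(m:ℝ)) := by
    have hw : (2+3*(m:ℝ))/(2+(m:ℝ)) = 1 + 2*(m:ℝ)/(2+(m:ℝ)) := by
      field_simp; ring
    have h2 := one_add_mul_self_le_rpow_one_add
      (le_trans (by norm_num) (by positivity : (0:ℝ) ≤ 2*(m:ℝ)/(2+(m:ℝ))) :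
        (-1:ℝ) ≤ 2*(m:ℝ)/(2+(m:ℝ)))
      (by linarith [hk0] : (1:ℝ) ≤ 1 + 2/(m:ℝ))
    have hval : 1 + (1 + 2/(m:ℝ)) * (2*(m:ℝ)/(2+(m:ℝ))) = 3 := by
      field_simp; ring
    rw [hval, ← hw] at h2
    exact h2
  have hw0 : (0:ℝ) < (2+3*(m:ℝ))/(2+(m:ℝ)) := by positivity
  have hsplit : ((2+3*(m:ℝ))/(2+(m:ℝ))) ^ (1 + 2/(m:ℝ))
      = (2+3*(m:ℝ))/(2+(m:ℝ)) * ((2+3*(m:ℝ))/(2+(m:ℝ))) ^ (2/(m:ℝ)) := by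
    rw [Real.rpow_add hw0, Real.rpow_one]
  rw [hueq, Real.mul_rpow hw0.le hr0.le]
  rw [hsplit] at hbern
  have hrkpos : (0:ℝ) < ((2+(m:ℝ))/(2*(1+(m:ℝ))*(2*x⁻¹-1))) ^ (2/(m:ℝ)) :=
    Real.rpow_pos_of_pos hr0 _
  have hkey : 2*(2+(m:ℝ)) ≤ (2+3*(m:ℝ)) * ((2+3*(m:ℝ))/(2+(m:ℝ))) ^ (2/(m:ℝ)) := by
    have hwid : (2+(m:ℝ)) * ((2+3*(m:ℝ))/(2+(m:ℝ))) = 2+3*(m:ℝ) := by field_simp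
    nlinarith [Real.rpow_pos_of_pos hw0 (2/(m:ℝ))]
  nlinarith

theorem stmt_15 (m : ℕ) (hm : 1 ≤ m) (b : ℝ) (hb : b ∈ Set.Ico (bmin m) (bmax m)) :
    (2 * (1 + (m : ℝ)) * (2 * b ^ (-(m : ℝ) / 2) - 1) * dmin m b ^ (1 + (m : ℝ) / 2) ≤
        -(m : ℝ) * (2 * b ^ (-(m : ℝ) / 2) - 1) * b ^ (1 + (m : ℝ) / 2)
          + 2 * (2 + (m : ℝ)) * t0 m b) ∧
    (-(m : ℝ) * (2 * b ^ (-(m : ℝ) / 2) - 1) * b ^ (1 + (m : ℝ) / 2)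
          + 2 * (2 + (m : ℝ)) * t0 m b ≤
        2 * (1 + (m : ℝ)) * (2 * b ^ (-(m : ℝ) / 2) - 1) * dmax m b ^ (1 + (m : ℝ) / 2)) ∧
    ∃ dopt ∈ Set.Icc (dmin m b) (dmax m b),
      2 * (1 + (m : ℝ)) * (2 * b ^ (-(m : ℝ) / 2) - 1) * dopt ^ (1 + (m : ℝ) / 2) =
        -(m : ℝ) * (2 * b ^ (-(m : ℝ) / 2) - 1) * b ^ (1 + (m : ℝ) / 2)
          + 2 * (2 + (m : ℝ)) * t0 m b := by
  obtain ⟨hb0, hx0, hx2, hxl, hxk⟩ := aux_setup m hm b hb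
  set x := b ^ ((m:ℝ)/2) with hxdef
  have hm1 : (1:ℝ) ≤ (m:ℝ) := by exact_mod_cast hm
  have hm0 : (0:ℝ) < (m:ℝ) := by linarith
  have hk0 : (0:ℝ) < 2 / (m:ℝ) := by positivity
  have hbneg : b ^ (-(m:ℝ)/2) = x⁻¹ := by
    rw [neg_div, Real.rpow_neg hb0.le]
  have hc0 : 0 < 2*x⁻¹ - 1 := by
    have h : (0:ℝ) < (2 - x)/x := div_pos (by linarith) hx0
    have h2 : (2 - x)/x = 2*x⁻¹ - 1 := by field_simp
    linarith [h2 ▸ h]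
  have hA0 : 0 < 2*(1+(m:ℝ))*(2*x⁻¹-1) := mul_pos (by linarith) hc0
  have hr0 : 0 < (2+(m:ℝ))/(2*(1+(m:ℝ))*(2*x⁻¹-1)) := div_pos (by linarith) hA0
  have hu0 : 0 < (2+3*(m:ℝ))/(2*(1+(m:ℝ))*(2*x⁻¹-1)) := div_pos (by linarith) hA0
  have ht0eq : ((2+(m:ℝ))/(2*(1+(m:ℝ))))^(2/(m:ℝ)) * (2*x⁻¹-1)^(-(2/(m:ℝ)))
      = ((2+(m:ℝ))/(2*(1+(m:ℝ))*(2*x⁻¹-1)))^(2/(m:ℝ)) := by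
    rw [Real.rpow_neg hc0.le, ← div_eq_mul_inv,
      ← Real.div_rpow (by positivity) hc0.le, div_div]
  have hpow : ∀ z : ℝ, 0 < z →
      (z ^ (2/(m:ℝ))) ^ (1 + (m:ℝ)/2) = z * z ^ (2/(m:ℝ)) := by
    intro z hz
    rw [← Real.rpow_mul hz.le,
      show (2/(m:ℝ)) * (1 + (m:ℝ)/2) = 1 + 2/(m:ℝ) by field_simp; ring,
      Real.rpow_add hz, Real.rpow_one]
  have hB : b ^ (1 + (m:ℝ)/2) = b * x := by
    rw [Real.rpow_add hb0, Real.rpow_one]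
  have hQ1 := aux1 m hm b x hb0 hx0 hx2 hxl hxk
  have hQ2 := aux2 m hm x hx0 hx2
  have hpos1 : 0 ≤ (m:ℝ)*(2*x⁻¹-1)*(b*x) := by positivity
  have h1 : 2 * (1 + (m : ℝ)) * (2 * b ^ (-(m : ℝ) / 2) - 1) * dmin m b ^ (1 + (m : ℝ) / 2) ≤
      -(m : ℝ) * (2 * b ^ (-(m : ℝ) / 2) - 1) * b ^ (1 + (m : ℝ) / 2)
        + 2 * (2 + (m : ℝ)) * t0 m b := by
    rw [t0, dmin, hbneg, ht0eq, hB, hpow _ hr0]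
    have hAr : 2*(1+(m:ℝ))*(2*x⁻¹-1) * ((2+(m:ℝ))/(2*(1+(m:ℝ))*(2*x⁻¹-1))) = 2+(m:ℝ) :=
      mul_div_cancel₀ _ hA0.ne'
    nlinarith [hQ1]
  have h2 : -(m : ℝ) * (2 * b ^ (-(m : ℝ) / 2) - 1) * b ^ (1 + (m : ℝ) / 2)
        + 2 * (2 + (m : ℝ)) * t0 m b ≤
      2 * (1 + (m : ℝ)) * (2 * b ^ (-(m : ℝ) / 2) - 1) * dmax m b ^ (1 + (m : ℝ) / 2) := by
    rw [t0, dmax, hbneg, ht0eq, hB, hpow _ hu0]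
    have hAu : 2*(1+(m:ℝ))*(2*x⁻¹-1) * ((2+3*(m:ℝ))/(2*(1+(m:ℝ))*(2*x⁻¹-1)))
        = 2+3*(m:ℝ) :=
      mul_div_cancel₀ _ hA0.ne'
    nlinarith [hQ2]
  refine ⟨h1, h2, ?_⟩
  have hdmin0 : 0 < dmin m b := by
    rw [dmin, hbneg]; exact Real.rpow_pos_of_pos hr0 _
  have hdd : dmin m b ≤ dmax m b := by
    rw [dmin, dmax, hbneg]
    exact Real.rpow_le_rpow hr0.le ((div_le_div_iff_of_pos_right hA0).mpr (by linarith)) hk0.le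
  have hcont : ContinuousOn
      (fun d : ℝ => 2 * (1 + (m : ℝ)) * (2 * b ^ (-(m : ℝ) / 2) - 1) * d ^ (1 + (m : ℝ) / 2))
      (Set.Icc (dmin m b) (dmax m b)) := by
    apply ContinuousOn.mul continuousOn_const
    intro d hd
    exact (Real.continuousAt_rpow_const d _
      (Or.inl (ne_of_gt (lt_of_lt_of_le hdmin0 hd.1)))).continuousWithinAt
  obtain ⟨d, hd, hfd⟩ := intermediate_value_Icc hdd hcont (⟨h1, h2⟩ : _ ∈ Set.Icc _ _)
  exact ⟨d, hd, hfd⟩
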